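/- arXiv:1710.01634 — 2 statements merged into one kernel-verified Lean document; each statement's English description precedes it below -/
import Mathlib

section
/- For every natural number d ≥ 1 and all reals x, y > 0, it holds that (x+y)^(d+1) - x^(d+1) ≤ λ · y^(d+1) + μ · x^(d+1), where λ = 2^(d/(d+1)) · (2^(1/(d+1)) - 1)^(-d) and μ = 2^(d/(d+1)) - 1. -/
/-!
For any `c > 1`, write `x + y` as the convex combination `(1/c) (c x) + ((c-1)/c) (c/(c-1) y)`.
Convexity of `t ↦ t ^ (d+1)` on `[0, ∞)` gives `(x+y)^(d+1) ≤ c^d x^(d+1) + (c/(c-1))^d y^(d+1)`,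
and for `c = 2^(1/(d+1))` the constants are `μ = c^d - 1` and `λ = (c/(c-1))^d`.
-/

open Real

theorem add_pow_succ_le_of_one_lt {c : ℝ} (hc : 1 < c) (n : ℕ) {x y : ℝ} (hx : 0 ≤ x)
    (hy : 0 ≤ y) :
    (x + y) ^ (n + 1) ≤ c ^ n * x ^ (n + 1) + (c / (c - 1)) ^ n * y ^ (n + 1) := by
  have hc0 : 0 < c := one_pos.trans hc
  have hc1 : 0 < c - 1 := sub_pos.2 hc
  have hconv := (convexOn_pow (n + 1)).2 (Set.mem_Ici.2 (by positivity : 0 ≤ c * x))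
    (Set.mem_Ici.2 (by positivity : 0 ≤ c / (c - 1) * y))
    (by positivity : 0 ≤ 1 / c) (by positivity : 0 ≤ (c - 1) / c) (by field_simp; ring)
  have hcomb : 1 / c * (c * x) + (c - 1) / c * (c / (c - 1) * y) = x + y := by field_simp
  simp only [smul_eq_mul, hcomb] at hconv
  calc (x + y) ^ (n + 1)
      ≤ 1 / c * (c * x) ^ (n + 1) + (c - 1) / c * (c / (c - 1) * y) ^ (n + 1) := hconv
    _ = c ^ n * x ^ (n + 1) + (c / (c - 1)) ^ n * y ^ (n + 1) := by
      rw [mul_pow, mul_pow, pow_succ c, pow_succ (c / (c - 1))]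
      field_simp

theorem rpow_one_div_succ_pow (a : ℝ) (ha : 0 ≤ a) (n : ℕ) :
    (a ^ ((1 : ℝ) / (n + 1))) ^ n = a ^ ((n : ℝ) / (n + 1)) := by
  rw [← rpow_natCast, ← rpow_mul ha, one_div_mul_eq_div]

theorem smoothness_inequality_general (d : ℕ) (x y : ℝ) (hx : 0 < x) (hy : 0 < y) :
    (x + y) ^ (d + 1) - x ^ (d + 1) ≤
      ((2 : ℝ) ^ ((d : ℝ) / (d + 1)) * ((2 : ℝ) ^ ((1 : ℝ) / (d + 1)) - 1) ^ (-(d : ℝ))) * y ^ (d + 1)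
        + ((2 : ℝ) ^ ((d : ℝ) / (d + 1)) - 1) * x ^ (d + 1) := by
  set c : ℝ := (2 : ℝ) ^ ((1 : ℝ) / (d + 1))
  have hc : 1 < c := one_lt_rpow (by norm_num) (by positivity)
  have hlam : (2 : ℝ) ^ ((d : ℝ) / (d + 1)) * (c - 1) ^ (-(d : ℝ)) = (c / (c - 1)) ^ d := by
    rw [← rpow_one_div_succ_pow 2 zero_le_two, rpow_neg (sub_pos.2 hc).le, rpow_natCast,
      ← div_eq_mul_inv, div_pow]
  rw [hlam, ← rpow_one_div_succ_pow 2 zero_le_two]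
  linarith [add_pow_succ_le_of_one_lt hc d hx.le hy.le]

theorem smoothness_inequality (d : ℕ) (hd : 1 ≤ d) (x y : ℝ) (hx : 0 < x) (hy : 0 < y) :
    (x + y) ^ (d + 1) - x ^ (d + 1) ≤
      ((2 : ℝ) ^ ((d : ℝ) / (d + 1)) * ((2 : ℝ) ^ ((1 : ℝ) / (d + 1)) - 1) ^ (-(d : ℝ))) * y ^ (d + 1)
        + ((2 : ℝ) ^ ((d : ℝ) / (d + 1)) - 1) * x ^ (d + 1) :=
  smoothness_inequality_general d x y hx hy
end

section
/- Let c : ℝ → ℝ be given by c(x) = ∑_{k=0}^{d} aₖ xᵏ with all aₖ ≥ 0, and let C(x) = x·c(x). Then for all reals 0 ≤ a ≤ b, ∫_a^b c(x) dx ≥ (C(b) - C(a))/(d+1). -/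
open Finset

theorem sub_pow_succ_div_le_integral_pow {a b : ℝ} (ha : 0 ≤ a) (hab : a ≤ b) {k d : ℕ}
    (hkd : k ≤ d) : (b ^ (k + 1) - a ^ (k + 1)) / ((d : ℝ) + 1) ≤ ∫ x in a..b, x ^ k := by
  rw [integral_pow]
  have hk : (k : ℝ) + 1 ≤ (d : ℝ) + 1 := by exact_mod_cast Nat.succ_le_succ hkd
  exact div_le_div_of_nonneg_left (sub_nonneg.mpr (pow_le_pow_left₀ ha hab _))
    (by positivity) hk

theorem integral_sum_mul_pow (s : Finset ℕ) (coef : ℕ → ℝ) (a b : ℝ) :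
    ∫ x in a..b, ∑ k ∈ s, coef k * x ^ k = ∑ k ∈ s, coef k * ∫ x in a..b, x ^ k := by
  rw [intervalIntegral.integral_finsetSum fun k _ =>
    (intervalIntegral.intervalIntegrable_pow k).const_mul _]
  simp only [intervalIntegral.integral_const_mul]

theorem integral_ge_joint_cost_diff (d : ℕ) (coef : ℕ → ℝ) (hcoef : ∀ k, 0 ≤ coef k)
    (c C : ℝ → ℝ) (hc : ∀ x, c x = ∑ k ∈ Finset.range (d + 1), coef k * x ^ k)
    (hC : ∀ x, C x = x * c x) (a b : ℝ) (ha : 0 ≤ a) (hab : a ≤ b) :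
    (∫ x in a..b, c x) ≥ (C b - C a) / ((d : ℝ) + 1) := by
  have hCdiff : C b - C a = ∑ k ∈ range (d + 1), coef k * (b ^ (k + 1) - a ^ (k + 1)) := by
    simp only [hC, hc, mul_sum, ← sum_sub_distrib]
    exact sum_congr rfl fun k _ => by ring
  calc (C b - C a) / ((d : ℝ) + 1)
      = ∑ k ∈ range (d + 1), coef k * ((b ^ (k + 1) - a ^ (k + 1)) / ((d : ℝ) + 1)) := by
        simp only [hCdiff, sum_div, mul_div_assoc]
    _ ≤ ∑ k ∈ range (d + 1), coef k * ∫ x in a..b, x ^ k :=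
        sum_le_sum fun k hk => mul_le_mul_of_nonneg_left
          (sub_pow_succ_div_le_integral_pow ha hab (Nat.lt_succ_iff.mp (mem_range.mp hk)))
          (hcoef k)
    _ = ∫ x in a..b, c x := by
        simp only [hc, integral_sum_mul_pow]
end
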